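/- If E is a normed space whose weak topology has the Pytkeev property, then for every subset A of E with 0 in the weak closure of A but 0 ∉ A, there exists n ∈ ℕ such that 0 lies in the weak closure of A ∩ nB, where B is the closed unit ball. -/

import Mathlib

/-!
If every bounded piece of `A` misses `0` weakly, then `0` is a weak closure point of each
`A ∖ nB`. Weak-* compactness of the balls of `E'` (Banach–Alaoglu) lets one pick finite sets
`Pₙ ⊆ A ∖ nB` such that `D = ⋃ Pₙ` still has `0` in its weak closure, while every bounded subset
of `D` is finite. The Pytkeev property then yields infinite, hence unbounded, sets `Sₖ ⊆ D`
accumulating at `0`. By Baire's theorem in `E'` the polars of the `Sₖ` cannot cover `E'`, so some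
functional `f` exceeds `1` in modulus somewhere on every `Sₖ`, and the weak neighbourhood
`{|f| < 1}` of `0` contains no `Sₖ`.
-/

open Filter Topology Set

def PytkeevSpace (X : Type*) [TopologicalSpace X] : Prop :=
  ∀ (A : Set X) (x : X), x ∈ closure A \ A →
    ∃ S : ℕ → Set X, (∀ n, S n ⊆ A ∧ (S n).Infinite) ∧
      ∀ U ∈ nhds x, ∃ n, S n ⊆ U

open Bornology Metric

theorem IsCompact.exists_finite_subset_forall_mem_of_mem_closure {K X : Type*}
    [TopologicalSpace K] [TopologicalSpace X] {C : Set K} (hC : IsCompact C) {A : Set X} {x : X}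
    (hx : x ∈ closure A) {V : K → Set X} (hV : ∀ k ∈ C, V k ∈ 𝓝 x)
    (hV' : ∀ a, IsOpen {k | a ∈ V k}) :
    ∃ P ⊆ A, P.Finite ∧ ∀ k ∈ C, ∃ a ∈ P, a ∈ V k := by
  obtain ⟨P, hPA, hP, hcover⟩ := hC.elim_finite_subcover_image (c := fun a => {k | a ∈ V k})
    (fun a _ => hV' a) fun k hk => by
      obtain ⟨a, hak, haA⟩ := mem_closure_iff_nhds.1 hx _ (hV k hk)
      exact mem_biUnion haA hak
  exact ⟨P, hPA, hP, fun k hk => by simpa using hcover hk⟩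

theorem isOpen_setOf_forall_norm_lt_one {ι X F : Type*} [Finite ι] [TopologicalSpace X]
    [SeminormedAddCommGroup F] {φ : ι → X → F} (hφ : ∀ i, Continuous (φ i)) :
    IsOpen {x | ∀ i, ‖φ i x‖ < 1} := by
  simpa only [ofPred_forall] using isOpen_iInter_of_finite fun i =>
    isOpen_lt (hφ i).norm continuous_const

section

variable {𝕜 E : Type*} [RCLike 𝕜] [NormedAddCommGroup E] [NormedSpace 𝕜 E]

theorem continuous_apply_toWeakSpace_symm (f : StrongDual 𝕜 E) :
    Continuous fun x : WeakSpace 𝕜 E => f ((toWeakSpace 𝕜 E).symm x) :=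
  WeakBilin.eval_continuous (topDualPairing 𝕜 E).flip f

theorem exists_finset_setOf_forall_norm_lt_one_subset {U : Set (WeakSpace 𝕜 E)}
    (hU : U ∈ 𝓝 (0 : WeakSpace 𝕜 E)) :
    ∃ s : Finset (StrongDual 𝕜 E),
      {x | ∀ f ∈ s, ‖f ((toWeakSpace 𝕜 E).symm x)‖ < 1} ⊆ U := by
  classical
  obtain ⟨t, ht, htU⟩ := (LinearMap.hasBasis_weakBilin (topDualPairing 𝕜 E).flip).mem_iff.1 hU
  obtain ⟨s, r, hr, rfl⟩ := SeminormFamily.basisSets_iff _ |>.1 ht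
  refine ⟨s.image ((r⁻¹ : 𝕜) • ·), fun x hx => htU <|
    (Seminorm.mem_ball_zero _).2 <| Seminorm.finset_sup_apply_lt hr fun f hf => ?_⟩
  have := hx _ (Finset.mem_image_of_mem _ hf)
  rwa [smul_apply, norm_smul, norm_inv, RCLike.norm_ofReal, abs_of_pos hr,
    inv_mul_lt_iff₀ hr, mul_one] at this

theorem exists_finite_subset_forall_finset_exists_norm_lt_one {A : Set (WeakSpace 𝕜 E)}
    (hA : (0 : WeakSpace 𝕜 E) ∈ closure A) (n : ℕ) :
    ∃ P ⊆ A, P.Finite ∧ ∀ s : Finset (StrongDual 𝕜 E), s.card ≤ n → (∀ f ∈ s, ‖f‖ ≤ n) →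
      ∃ a ∈ P, ∀ f ∈ s, ‖f ((toWeakSpace 𝕜 E).symm a)‖ < 1 := by
  obtain ⟨P, hPA, hP, hPC⟩ := IsCompact.exists_finite_subset_forall_mem_of_mem_closure
    (isCompact_univ_pi fun _ : Fin n => WeakDual.isCompact_closedBall (𝕜 := 𝕜) (E := E) 0 n) hA
    (V := fun g => {x | ∀ i, ‖g i ((toWeakSpace 𝕜 E).symm x)‖ < 1})
    (fun g _ => (isOpen_setOf_forall_norm_lt_one fun i =>
      continuous_apply_toWeakSpace_symm (WeakDual.toStrongDual (g i))).mem_nhds (by simp))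
    fun a => isOpen_setOf_forall_norm_lt_one fun i =>
      (WeakDual.eval_continuous _).comp (continuous_apply i)
  refine ⟨P, hPA, hP, fun s hcard hnorm => ?_⟩
  -- padding `s` with zeros to an `n`-tuple puts it in the weak-* compact set `(n • B_{E'})ⁿ`
  set g : Fin n → StrongDual 𝕜 E := fun i => s.toList.getD i 0
  have hg (i : Fin n) : ‖g i‖ ≤ n := by
    simp only [g, List.getD_eq_getElem?_getD]
    cases h : s.toList[(i : ℕ)]? with
    | none => simp
    | some f => simpa using hnorm f (Finset.mem_toList.1 (List.mem_of_getElem? h))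
  obtain ⟨a, haP, ha⟩ := hPC (fun i => StrongDual.toWeakDual (g i)) fun i _ => by simpa using hg i
  refine ⟨a, haP, fun f hf => ?_⟩
  obtain ⟨i, hi, rfl⟩ := List.mem_iff_getElem.1 (Finset.mem_toList.2 hf)
  have := ha ⟨i, hi.trans_le (by simpa using hcard)⟩
  simpa [g, List.getElem?_eq_getElem hi] using this

theorem exists_subset_zero_mem_closure_forall_isBounded_finite {A : Set (WeakSpace 𝕜 E)}
    (hA : ∀ n : ℕ, (0 : WeakSpace 𝕜 E) ∈
      closure (A \ {x | ‖(toWeakSpace 𝕜 E).symm x‖ ≤ n})) :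
    ∃ D ⊆ A, (0 : WeakSpace 𝕜 E) ∈ closure D ∧
      ∀ B ⊆ D, IsBounded (toWeakSpace 𝕜 E ⁻¹' B) → B.Finite := by
  choose P hPA hP hPs using fun n => exists_finite_subset_forall_finset_exists_norm_lt_one (hA n) n
  refine ⟨⋃ n, P n, iUnion_subset fun n => (hPA n).trans sdiff_subset, ?_, ?_⟩
  · refine mem_closure_iff_nhds.2 fun U hU => ?_
    obtain ⟨s, hsU⟩ := exists_finset_setOf_forall_norm_lt_one_subset hU
    obtain ⟨n, hcard, hnorm⟩ : ∃ n : ℕ, s.card ≤ n ∧ ∀ f ∈ s, ‖f‖ ≤ n :=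
      ((eventually_ge_atTop s.card).and <| (s.eventually_all).2 fun f _ =>
        (eventually_ge_atTop ⌈‖f‖⌉₊).mono fun _ hn =>
          (Nat.le_ceil _).trans (by exact_mod_cast hn)).exists
    obtain ⟨a, haP, ha⟩ := hPs n s hcard hnorm
    exact ⟨a, hsU ha, mem_iUnion_of_mem n haP⟩
  · intro B hBD hB
    obtain ⟨R, hR⟩ := isBounded_iff_forall_norm_le.1 hB
    obtain ⟨N, hN⟩ := exists_nat_ge R
    refine ((finite_lt_nat N).biUnion fun n _ => hP n).subset fun x hx => ?_
    obtain ⟨n, hn⟩ := mem_iUnion.1 (hBD hx)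
    refine mem_biUnion (show n < N from not_le.1 fun hNn => (hPA n hn).2 ?_) hn
    exact (hR _ hx).trans (hN.trans (by exact_mod_cast hNn))

theorem isBounded_of_nonempty_interior_polar {s : Set E}
    (h : (interior (StrongDual.polar 𝕜 s)).Nonempty) : IsBounded s := by
  obtain ⟨f₀, hf₀⟩ := h
  obtain ⟨δ, hδ, hball⟩ := Metric.isOpen_iff.1 isOpen_interior f₀ hf₀
  refine isBounded_iff_forall_norm_le.2 ⟨4 / δ, fun x hx => ?_⟩
  have key : ∀ f ∈ ball f₀ δ, ‖f x‖ ≤ 1 := fun f hf => interior_subset (hball hf) x hx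
  obtain ⟨g, hg, hgx⟩ := exists_dual_vector'' 𝕜 x
  have hgδ : f₀ + ((δ / 2 : ℝ) : 𝕜) • g ∈ ball f₀ δ := by
    rw [mem_ball, dist_eq_norm, add_sub_cancel_left, norm_smul, RCLike.norm_ofReal,
      abs_of_pos (half_pos hδ)]
    exact (mul_le_of_le_one_right (half_pos hδ).le hg).trans_lt (half_lt_self hδ)
  have : δ / 2 * ‖x‖ ≤ 2 := calc
    δ / 2 * ‖x‖ = ‖(f₀ + ((δ / 2 : ℝ) : 𝕜) • g) x - f₀ x‖ := by
      simp [hgx, abs_of_pos hδ]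
    _ ≤ ‖(f₀ + ((δ / 2 : ℝ) : 𝕜) • g) x‖ + ‖f₀ x‖ := norm_sub_le _ _
    _ ≤ 2 := by linarith [key _ hgδ, key _ (mem_ball_self hδ)]
  rw [le_div_iff₀ hδ]
  linarith

theorem exists_dual_forall_exists_one_lt_norm {S : ℕ → Set E} (hS : ∀ k, ¬IsBounded (S k)) :
    ∃ f : StrongDual 𝕜 E, ∀ k, ∃ x ∈ S k, 1 < ‖f x‖ := by
  by_contra! h
  obtain ⟨k, hk⟩ := nonempty_interior_of_iUnion_of_closed
    (fun k => NormedSpace.isClosed_polar 𝕜 (S k))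
    (eq_univ_of_forall fun f => mem_iUnion.2 <|
      (h f).imp fun _ hk => (StrongDual.mem_polar_iff _ _).2 hk)
  exact hS k (isBounded_of_nonempty_interior_polar hk)

theorem PytkeevSpace.zero_notMem_closure_of_forall_isBounded_finite
    (hP : PytkeevSpace (WeakSpace 𝕜 E)) {D : Set (WeakSpace 𝕜 E)}
    (hD : ∀ B ⊆ D, IsBounded (toWeakSpace 𝕜 E ⁻¹' B) → B.Finite)
    (h0 : (0 : WeakSpace 𝕜 E) ∉ D) : (0 : WeakSpace 𝕜 E) ∉ closure D := by
  intro hcl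
  obtain ⟨S, hS, hSnhds⟩ := hP D 0 ⟨hcl, h0⟩
  obtain ⟨f, hf⟩ := exists_dual_forall_exists_one_lt_norm (𝕜 := 𝕜)
    (S := fun k => toWeakSpace 𝕜 E ⁻¹' S k) fun k hk => (hS k).2 (hD _ (hS k).1 hk)
  obtain ⟨k, hk⟩ := hSnhds {x | ‖f ((toWeakSpace 𝕜 E).symm x)‖ < 1}
    ((isOpen_lt (continuous_apply_toWeakSpace_symm f).norm continuous_const).mem_nhds (by simp))
  obtain ⟨x, hx, hfx⟩ := hf k
  exact (hk hx).not_gt hfx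

end

/-- The Claim in the proof of Theorem 1.4: if a normed space with the weak topology has the
Pytkeev property, then any set having `0` as a weak closure point (and not containing `0`)
has a bounded piece `A ∩ nB` with `0` in its weak closure. -/
theorem bounded_piece_of_weak_pytkeev
    {E : Type*} [NormedAddCommGroup E] [NormedSpace ℝ E]
    (hP : PytkeevSpace (WeakSpace ℝ E))
    (A : Set (WeakSpace ℝ E))
    (hA : (0 : WeakSpace ℝ E) ∈ closure A \ A) :
    ∃ n : ℕ, (0 : WeakSpace ℝ E) ∈
      closure (A ∩ {x : WeakSpace ℝ E | ‖(toWeakSpace ℝ E).symm x‖ ≤ n}) := by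
  by_contra! hbounded
  have hfar (n : ℕ) : (0 : WeakSpace ℝ E) ∈
      closure (A \ {x | ‖(toWeakSpace ℝ E).symm x‖ ≤ n}) := by
    have := hA.1
    rw [← inter_union_sdiff A {x | ‖(toWeakSpace ℝ E).symm x‖ ≤ n}, closure_union] at this
    exact this.resolve_left (hbounded n)
  obtain ⟨D, hDA, hD0, hD⟩ := exists_subset_zero_mem_closure_forall_isBounded_finite hfar
  exact hP.zero_notMem_closure_of_forall_isBounded_finite hD (fun h => hA.2 (hDA h)) hD0
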